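/- arXiv:2208.06938 — 2 statements merged into one kernel-verified Lean document; each statement's English description precedes it below -/
import Mathlib

section
/- Let C be the 2×2 integer matrix with rows (10, 2) and (2, -1). Then for every natural number n ≥ 2 and all indices i, j, the (i,j) entry of C^n is strictly positive. -/
/-!
Right multiplication by `C = !![10, 2; 2, -1]` maps the cone of row vectors `(x, y)` with
`0 < y ≤ x` into itself, since `(x, y) C = (10x + 2y, 2x - y)` and `2x - y ≥ x`.
Both rows of `C² = !![104, 18; 18, 5]` lie in this cone, hence so do all rows of `C^n`, `n ≥ 2`.
-/

open Matrix

def dominantCone (R : Type*) [CommRing R] [LinearOrder R] : Set (Fin 2 → R) :=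
  {v | 0 < v 1 ∧ v 1 ≤ v 0}

variable {R : Type*} [CommRing R] [LinearOrder R] [IsStrictOrderedRing R]

theorem vecMul_mem_dominantCone {v : Fin 2 → R} (hv : v ∈ dominantCone R) :
    v ᵥ* !![10, 2; 2, -1] ∈ dominantCone R := by
  have hmul : v ᵥ* !![10, 2; 2, -1] = ![10 * v 0 + 2 * v 1, 2 * v 0 - v 1] := by
    ext j
    simp only [vecMul, vec2_dotProduct]
    fin_cases j <;> simp <;> ring
  obtain ⟨hpos, hle⟩ := hv
  rw [hmul]
  constructor <;> simp <;> linarith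

theorem pow_row_mem_dominantCone {n : ℕ} (hn : 2 ≤ n) (i : Fin 2) :
    ((!![10, 2; 2, -1] : Matrix (Fin 2) (Fin 2) R) ^ n) i ∈ dominantCone R := by
  induction n, hn using Nat.le_induction with
  | base =>
    have hsq : (!![10, 2; 2, -1] : Matrix (Fin 2) (Fin 2) R) ^ 2 = !![104, 18; 18, 5] := by
      rw [sq, mul_fin_two]; norm_num
    rw [hsq]
    fin_cases i <;> norm_num [dominantCone]
  | succ n _ ih =>
    rw [pow_succ, mul_apply_eq_vecMul]
    exact vecMul_mem_dominantCone ih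

/-- All entries of `C^n` are strictly positive for `n ≥ 2`, where
`C = !![10, 2; 2, -1]`. -/
theorem stmt2 (n : ℕ) (hn : 2 ≤ n) (i j : Fin 2) :
    0 < ((!![10, 2; 2, -1] : Matrix (Fin 2) (Fin 2) ℤ) ^ n) i j := by
  obtain ⟨hpos, hle⟩ := pow_row_mem_dominantCone (R := ℤ) hn i
  fin_cases j
  · exact hpos.trans_le hle
  · exact hpos
end

section
/- Let X be a nonempty preirreducible topological space, Y a T1 topological space, χ : X → Y a continuous map, f : X → X any function, and k ≥ 1 an integer with χ ∘ f^k = χ. Suppose there exists α ∈ X whose forward orbit {f^n(α) : n ∈ ℕ} is dense in X. Then χ is constant. -/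
/-!
Along the orbit of `α`, the invariance `χ ∘ f^[k] = χ` makes `n ↦ χ (f^[n] α)` periodic, so `χ`
takes finitely many values on the dense orbit, hence (by continuity, finite sets being closed in a
T1 space) on all of `X`. The range of `χ` is then a finite preirreducible subset of a T1 space,
and such a set is a subsingleton: it is covered by the two closed sets `{y}` and `S \ {y}`.
-/

open Set

theorem Function.apply_iterate_eq_apply_iterate_mod {α β : Type*} {g : α → β} {f : α → α}
    {k : ℕ} (h : g ∘ f^[k] = g) (n : ℕ) (x : α) : g (f^[n] x) = g (f^[n % k] x) := by
  conv_lhs => rw [← Nat.div_add_mod n k, Function.iterate_add_apply, Function.iterate_mul]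
  exact congrFun (Function.iterate_invariant h (n / k)) _

theorem Function.finite_image_orbit_of_comp_iterate_eq {α β : Type*} {g : α → β} {f : α → α}
    {k : ℕ} (hk : 0 < k) (h : g ∘ f^[k] = g) (x : α) :
    (g '' range fun n => f^[n] x).Finite := by
  refine ((finite_Iio k).image fun i => g (f^[i] x)).subset ?_
  rintro _ ⟨_, ⟨n, rfl⟩, rfl⟩
  exact ⟨n % k, Nat.mod_lt n hk, (Function.apply_iterate_eq_apply_iterate_mod h n x).symm⟩

theorem IsPreirreducible.subsingleton_of_finite {Y : Type*} [TopologicalSpace Y] [T1Space Y]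
    {S : Set Y} (hS : IsPreirreducible S) (hfin : S.Finite) : S.Subsingleton := by
  intro y hy z hz
  have hcover : S ⊆ {y} ∪ S \ {y} := fun w hw => (em (w = y)).imp id fun hwy => ⟨hw, hwy⟩
  rcases isPreirreducible_iff_isClosed_union_isClosed.mp hS _ _ isClosed_singleton
      (hfin.sdiff.isClosed) hcover with hsub | hsub
  · exact (hsub hz).symm
  · exact absurd rfl (hsub hy).2

theorem Dense.subsingleton_range_of_finite_image {X Y : Type*} [TopologicalSpace X]
    [TopologicalSpace Y] [PreirreducibleSpace X] [T1Space Y] {χ : X → Y} (hχ : Continuous χ)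
    {s : Set X} (hs : Dense s) (hfin : (χ '' s).Finite) : (range χ).Subsingleton := by
  have hrange : range χ ⊆ χ '' s :=
    hfin.isClosed.closure_eq ▸ hχ.range_subset_closure_image_dense hs
  have hirr : IsPreirreducible (range χ) :=
    image_univ ▸ PreirreducibleSpace.isPreirreducible_univ.image χ hχ.continuousOn
  exact hirr.subsingleton_of_finite (hfin.subset hrange)

theorem stmt8_general (X Y : Type*) [TopologicalSpace X] [TopologicalSpace Y]
    [PreirreducibleSpace X] [T1Space Y]
    (χ : X → Y) (hχ : Continuous χ) (f : X → X) (k : ℕ) (hk : 1 ≤ k)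
    (h : χ ∘ f^[k] = χ)
    (hdense : ∃ α : X, Dense {x | ∃ n : ℕ, f^[n] α = x}) :
    ∀ a b : X, χ a = χ b := by
  obtain ⟨α, hα⟩ := hdense
  intro a b
  exact hα.subsingleton_range_of_finite_image hχ
    (Function.finite_image_orbit_of_comp_iterate_eq hk h α) (mem_range_self a) (mem_range_self b)

/-- If `X` is nonempty and preirreducible, `Y` is T1, `χ : X → Y` is continuous
with `χ ∘ f^k = χ` for some `k ≥ 1`, and some point has dense forward orbit
under `f`, then `χ` is constant. -/
theorem stmt8 (X Y : Type*) [TopologicalSpace X] [TopologicalSpace Y]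
    [PreirreducibleSpace X] [Nonempty X] [T1Space Y]
    (χ : X → Y) (hχ : Continuous χ) (f : X → X) (k : ℕ) (hk : 1 ≤ k)
    (h : χ ∘ f^[k] = χ)
    (hdense : ∃ α : X, Dense {x | ∃ n : ℕ, f^[n] α = x}) :
    ∀ a b : X, χ a = χ b :=
  stmt8_general X Y χ hχ f k hk h hdense
end
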